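/- For each real ν, the function b_ν(t) = (√2/2)·(1 + (√6 - ν√(10t²+15))/(√30·ν + √6 - (√5·ν + 2)√(2t²+3)))·1/√(t²+1) satisfies the ODE db/dt = -PQ/2 + (P/(2t))(1-b²) - Qb on its domain of definition, where P(t) = √6·√(2t²+2)/√(2t²+3) and Q(t) = t/(t²+1), and b_ν(√6/2) = ν. -/

import Mathlib

/-- Metric coefficient `P(t) = √6·√(2t²+2)/√(2t²+3)` of the Stenzel metric in the variable `t = R₋`. -/
noncomputable def Pfun (t : ℝ) : ℝ := Real.sqrt 6 * Real.sqrt (2 * t ^ 2 + 2) / Real.sqrt (2 * t ^ 2 + 3)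

/-- Metric coefficient `Q(t) = t/(t²+1)`. -/
noncomputable def Qfun (t : ℝ) : ℝ := t / (t ^ 2 + 1)

/-- The explicit family `b_ν` of solutions of the reduced Spin(7) instanton ODE. -/
noncomputable def bNu (ν t : ℝ) : ℝ :=
  Real.sqrt 2 / 2 *
    (1 + (Real.sqrt 6 - ν * Real.sqrt (10 * t ^ 2 + 15)) /
      (Real.sqrt 30 * ν + Real.sqrt 6 - (Real.sqrt 5 * ν + 2) * Real.sqrt (2 * t ^ 2 + 3))) /
    Real.sqrt (t ^ 2 + 1)

/-
Substituting `b = c / √(t² + 1)` cancels the term `-Q b` and, since `P = 2√3 √(t²+1) / √(2t²+3)`,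
turns the ODE into the Riccati equation `c' = √3 (1 - c²) / (t √(2t²+3))`. In the variable
`s = √(2t²+3)` it reads `dc/ds = √3 (1 - c²) / (s² - 3)`, whose solutions
(`artanh c = ½ log ((s - √3)/(s + √3)) + const`) are Möbius transformations of `s`. The one giving
`b_ν` is `cNu ν`, with derivative `√3 (2 - 5ν²) / D²` for `D` its denominator. At `t = √6/2` one
has `s = √6` and `D = -√6`.
-/

open Real

lemma sqrt_thirty : √30 = √5 * √6 := by
  rw [← sqrt_mul (by norm_num)]; norm_num

noncomputable def cNu (ν s : ℝ) : ℝ :=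
  √2 / 2 * (1 + (√6 - ν * (√5 * s)) / (√30 * ν + √6 - (√5 * ν + 2) * s))

lemma bNu_eq_cNu_div (ν : ℝ) : bNu ν = fun t ↦ cNu ν √(2 * t ^ 2 + 3) / √(t ^ 2 + 1) := by
  funext t
  have h : √(10 * t ^ 2 + 15) = √5 * √(2 * t ^ 2 + 3) := by
    rw [← sqrt_mul (by norm_num)]; ring_nf
  simp only [bNu, cNu, h]

lemma hasDerivAt_cNu {ν s : ℝ} (hD : √30 * ν + √6 - (√5 * ν + 2) * s ≠ 0) :
    HasDerivAt (cNu ν) (√3 * (2 - 5 * ν ^ 2) / (√30 * ν + √6 - (√5 * ν + 2) * s) ^ 2) s := by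
  have hN : HasDerivAt (fun s ↦ √6 - ν * (√5 * s)) (-(ν * (√5 * 1))) s :=
    (((hasDerivAt_id s).const_mul _).const_mul _).const_sub _
  have hDen : HasDerivAt (fun s ↦ √30 * ν + √6 - (√5 * ν + 2) * s) (-((√5 * ν + 2) * 1)) s :=
    ((hasDerivAt_id s).const_mul _).const_sub _
  refine (((hN.div hDen hD).const_add 1).const_mul (√2 / 2)).congr_deriv ?_
  have h6 : √6 = √2 * √3 := by rw [← sqrt_mul (by norm_num)]; norm_num
  have h2 : √2 ^ 2 = 2 := sq_sqrt (by norm_num)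
  have h5 : √5 ^ 2 = 5 := sq_sqrt (by norm_num)
  rw [mul_div_assoc']
  congr 1
  rw [sqrt_thirty, h6]
  linear_combination (√3 - ν ^ 2 * √5 ^ 2 * √3 / 2) * h2 - ν ^ 2 * √3 * h5

lemma hasDerivAt_cNu_riccati {ν s : ℝ} (hD : √30 * ν + √6 - (√5 * ν + 2) * s ≠ 0)
    (hs : s ^ 2 ≠ 3) :
    HasDerivAt (cNu ν) (√3 * (1 - cNu ν s ^ 2) / (s ^ 2 - 3)) s := by
  refine (hasDerivAt_cNu hD).congr_deriv ?_
  have h2 : √2 ^ 2 = 2 := sq_sqrt (by norm_num)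
  have h5 : √5 ^ 2 = 5 := sq_sqrt (by norm_num)
  have h6 : √6 ^ 2 = 6 := sq_sqrt (by norm_num)
  unfold cNu
  set D := √30 * ν + √6 - (√5 * ν + 2) * s with hD_def
  field_simp
  rw [hD_def, sqrt_thirty]
  ring_nf
  simp only [h2, h5, h6]
  ring

lemma hasDerivAt_cNu_comp {ν t : ℝ} (ht : t ≠ 0)
    (hD : √30 * ν + √6 - (√5 * ν + 2) * √(2 * t ^ 2 + 3) ≠ 0) :
    HasDerivAt (fun x ↦ cNu ν √(2 * x ^ 2 + 3))
      (√3 * (1 - cNu ν √(2 * t ^ 2 + 3) ^ 2) / (t * √(2 * t ^ 2 + 3))) t := by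
  have hs2 : √(2 * t ^ 2 + 3) ^ 2 = 2 * t ^ 2 + 3 := sq_sqrt (by positivity)
  have hs : HasDerivAt (fun x ↦ √(2 * x ^ 2 + 3)) (2 * (2 * t) / (2 * √(2 * t ^ 2 + 3))) t := by
    refine HasDerivAt.sqrt ?_ (by positivity)
    simpa using ((hasDerivAt_pow 2 t).const_mul 2).add_const 3
  have hs3 : √(2 * t ^ 2 + 3) ^ 2 ≠ 3 := by
    rw [hs2]; exact ne_of_gt (by linarith [sq_pos_of_ne_zero ht])
  refine ((hasDerivAt_cNu_riccati hD hs3).comp t hs).congr_deriv ?_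
  rw [hs2]
  field_simp
  ring

lemma hasDerivAt_div_sqrt_of_riccati {c : ℝ → ℝ} {t : ℝ} (ht : t ≠ 0)
    (hc : HasDerivAt c (√3 * (1 - c t ^ 2) / (t * √(2 * t ^ 2 + 3))) t) :
    HasDerivAt (fun x ↦ c x / √(x ^ 2 + 1))
      (-(Pfun t * Qfun t) / 2 + Pfun t / (2 * t) * (1 - (c t / √(t ^ 2 + 1)) ^ 2)
        - Qfun t * (c t / √(t ^ 2 + 1))) t := by
  have hu2 : √(t ^ 2 + 1) ^ 2 = t ^ 2 + 1 := sq_sqrt (by positivity)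
  have hu0 : √(t ^ 2 + 1) ≠ 0 := by positivity
  have hs0 : √(2 * t ^ 2 + 3) ≠ 0 := by positivity
  have hu : HasDerivAt (fun x ↦ √(x ^ 2 + 1)) (2 * t / (2 * √(t ^ 2 + 1))) t := by
    refine HasDerivAt.sqrt ?_ (by positivity)
    simpa using (hasDerivAt_pow 2 t).add_const 1
  refine (hc.div hu hu0).congr_deriv ?_
  have hP : Pfun t = 2 * √3 * √(t ^ 2 + 1) / √(2 * t ^ 2 + 3) := by
    rw [Pfun, ← sqrt_mul (by norm_num), mul_assoc, ← sqrt_mul (by norm_num),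
      show 6 * (2 * t ^ 2 + 2) = 2 ^ 2 * (3 * (t ^ 2 + 1)) by ring, sqrt_mul (by norm_num),
      sqrt_sq (by norm_num)]
  rw [hP, Qfun]
  set s := √(2 * t ^ 2 + 3)
  set u := √(t ^ 2 + 1)
  field_simp
  linear_combination (t ^ 2 * c t * s - √3 * u ^ 2) * hu2

lemma cNu_sqrt_six (ν : ℝ) : cNu ν √6 = √2 * √5 / 2 * ν := by
  rw [cNu, sqrt_thirty, show √5 * √6 * ν + √6 - (√5 * ν + 2) * √6 = -√6 by ring]
  field_simp
  ring

lemma bNu_sqrt_six_div_two (ν : ℝ) : bNu ν (√6 / 2) = ν := by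
  have h6 : (√6 / 2) ^ 2 = 3 / 2 := by rw [div_pow, sq_sqrt (by norm_num)]; norm_num
  rw [bNu_eq_cNu_div]
  beta_reduce
  rw [h6, show 2 * (3 / 2 : ℝ) + 3 = 6 by norm_num,
    show (3 / 2 : ℝ) + 1 = 5 / 2 by norm_num, cNu_sqrt_six, sqrt_div' _ (by norm_num)]
  field_simp
  rw [sq_sqrt (by norm_num)]

/-- `b_ν` satisfies `db/dt = -PQ/2 + (P/(2t))(1-b²) - Qb` wherever its denominator does not vanish,
and `b_ν(√6/2) = ν`. -/
theorem bNu_solves_reduced_spin7_ODE (ν : ℝ) :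
    bNu ν (Real.sqrt 6 / 2) = ν ∧
    ∀ t > (0 : ℝ),
      Real.sqrt 30 * ν + Real.sqrt 6 - (Real.sqrt 5 * ν + 2) * Real.sqrt (2 * t ^ 2 + 3) ≠ 0 →
      HasDerivAt (bNu ν)
        (-(Pfun t * Qfun t) / 2 + Pfun t / (2 * t) * (1 - (bNu ν t) ^ 2) - Qfun t * bNu ν t) t := by
  refine ⟨bNu_sqrt_six_div_two ν, fun t ht hD ↦ ?_⟩
  rw [bNu_eq_cNu_div]
  exact hasDerivAt_div_sqrt_of_riccati ht.ne' (hasDerivAt_cNu_comp ht.ne' hD)
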